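/- Let m ≥ 2, let 𝓐 and 𝓑 partition {1,...,d-1} with 𝔟 = card(𝓑), let κ_0, ..., κ_{d-1} > 0, and define κ(ξ) = κ_0 (∑_{i∈𝓐} κ_i ξ_i²)^{m/2} + ∑_{j∈𝓑} κ_j |ξ_j|^m on the unit sphere 𝕊^{d-2}. Then for every ξ ∈ 𝕊^{d-2}, κ(ξ) ≥ 2^{-(m-2)/2} · min{2^{-(m-2)(𝔟-1)/2}, 1} · min{κ_0 min_{i∈𝓐} κ_i^{m/2}, min_{j∈𝓑} κ_j}. -/

import Mathlib

/-!
Put `p = m / 2` and split the unit mass `1 = a + b` with `a = ∑_{i ∈ 𝓐} ξ_i²`,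
`b = ∑_{j ∈ 𝓑} ξ_j²`. Pulling out the smallest weight, the first term is at least
`κ₀ (min κ_i)^p a^p` and, by the power-mean inequality, the second at least
`(min κ_j) 𝔟^(1-p) b^p`. Since `𝔟 ≤ 2^(𝔟-1)`, the factor `𝔟^(1-p)` dominates
`2^(-(m-2)(𝔟-1)/2)`, and the power-mean inequality for two numbers gives
`a^p + b^p ≥ 2^(1-p) (a + b)^p = 2^(1-p)`.
-/

open Real Finset

namespace Finset

variable {ι : Type*} {s : Finset ι}

lemma inf'_mul_sum_le (hs : s.Nonempty) (w x : ι → ℝ) (hx : ∀ i ∈ s, 0 ≤ x i) :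
    s.inf' hs w * ∑ i ∈ s, x i ≤ ∑ i ∈ s, w i * x i := by
  rw [mul_sum]
  exact sum_le_sum fun i hi => mul_le_mul_of_nonneg_right (inf'_le w hi) (hx i hi)

lemma inf'_rpow_le_rpow_inf' (hs : s.Nonempty) (w : ι → ℝ) (p : ℝ) :
    s.inf' hs (fun i => w i ^ p) ≤ s.inf' hs w ^ p := by
  obtain ⟨i, hi, hmin⟩ := exists_mem_eq_inf' hs w
  rw [hmin]
  exact inf'_le (fun i => w i ^ p) hi

lemma card_rpow_mul_sum_rpow_le_sum_rpow (x : ι → ℝ) (hx : ∀ i ∈ s, 0 ≤ x i) {p : ℝ}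
    (hp : 1 ≤ p) : (#s : ℝ) ^ (1 - p) * (∑ i ∈ s, x i) ^ p ≤ ∑ i ∈ s, x i ^ p := by
  rcases s.eq_empty_or_nonempty with rfl | hs
  · simp [zero_rpow (by linarith : p ≠ 0)]
  have hcard : (0 : ℝ) < #s := by exact_mod_cast hs.card_pos
  calc (#s : ℝ) ^ (1 - p) * (∑ i ∈ s, x i) ^ p
      ≤ (#s : ℝ) ^ (1 - p) * ((#s : ℝ) ^ (p - 1) * ∑ i ∈ s, x i ^ p) := by
        gcongr
        exact rpow_sum_le_const_mul_sum_rpow_of_nonneg s hp hx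
    _ = ∑ i ∈ s, x i ^ p := by
        rw [← mul_assoc, ← rpow_add hcard, sub_add_sub_cancel', sub_self, rpow_zero, one_mul]

lemma inf'_rpow_mul_rpow_sum_le_rpow_sum_mul (hs : s.Nonempty) {w x : ι → ℝ}
    (hw : ∀ i ∈ s, 0 ≤ w i) (hx : ∀ i ∈ s, 0 ≤ x i) {p : ℝ} (hp : 0 ≤ p) :
    s.inf' hs (fun i => w i ^ p) * (∑ i ∈ s, x i) ^ p ≤ (∑ i ∈ s, w i * x i) ^ p := by
  have hw₀ : 0 ≤ s.inf' hs w := le_inf' hs w hw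
  have hx₀ : 0 ≤ ∑ i ∈ s, x i := sum_nonneg hx
  calc s.inf' hs (fun i => w i ^ p) * (∑ i ∈ s, x i) ^ p
      ≤ s.inf' hs w ^ p * (∑ i ∈ s, x i) ^ p := by
        gcongr
        exact inf'_rpow_le_rpow_inf' hs w p
    _ = (s.inf' hs w * ∑ i ∈ s, x i) ^ p := (mul_rpow hw₀ hx₀).symm
    _ ≤ (∑ i ∈ s, w i * x i) ^ p := by
        gcongr
        exact inf'_mul_sum_le hs w x hx

lemma inf'_mul_card_rpow_mul_rpow_sum_le (hs : s.Nonempty) {w x : ι → ℝ}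
    (hw : ∀ i ∈ s, 0 ≤ w i) (hx : ∀ i ∈ s, 0 ≤ x i) {p : ℝ} (hp : 1 ≤ p) :
    s.inf' hs w * ((#s : ℝ) ^ (1 - p) * (∑ i ∈ s, x i) ^ p) ≤ ∑ i ∈ s, w i * x i ^ p := by
  calc s.inf' hs w * ((#s : ℝ) ^ (1 - p) * (∑ i ∈ s, x i) ^ p)
      ≤ s.inf' hs w * ∑ i ∈ s, x i ^ p := by
        gcongr
        · exact le_inf' hs w hw
        · exact card_rpow_mul_sum_rpow_le_sum_rpow x hx hp
    _ ≤ ∑ i ∈ s, w i * x i ^ p :=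
        inf'_mul_sum_le hs w _ fun i hi => rpow_nonneg (hx i hi) p

end Finset

lemma two_rpow_one_sub_le_rpow_add_rpow {a b p : ℝ} (ha : 0 ≤ a) (hb : 0 ≤ b) (hab : a + b = 1)
    (hp : 1 ≤ p) : (2 : ℝ) ^ (1 - p) ≤ a ^ p + b ^ p := by
  have h := Finset.card_rpow_mul_sum_rpow_le_sum_rpow (s := Finset.univ) ![a, b]
    (by simp [Fin.forall_fin_two, ha, hb]) hp
  simpa [Fin.sum_univ_two, hab] using h

lemma natCast_le_two_rpow_sub_one {n : ℕ} (hn : 1 ≤ n) : (n : ℝ) ≤ 2 ^ ((n : ℝ) - 1) := by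
  obtain ⟨k, rfl⟩ := Nat.exists_eq_add_of_le' hn
  rw [Nat.cast_add_one, add_sub_cancel_right, rpow_natCast]
  exact_mod_cast Nat.lt_two_pow_self

lemma two_rpow_mul_sub_one_le_natCast_rpow {n : ℕ} (hn : 1 ≤ n) {q : ℝ} (hq : q ≤ 0) :
    (2 : ℝ) ^ (q * ((n : ℝ) - 1)) ≤ (n : ℝ) ^ q := by
  rw [mul_comm, rpow_mul zero_le_two]
  exact rpow_le_rpow_of_nonpos (by exact_mod_cast hn) (natCast_le_two_rpow_sub_one hn) hq

lemma two_rpow_one_sub_mul_min_le {a b c u v p : ℝ} (ha : 0 ≤ a) (hb : 0 ≤ b)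
    (hab : a + b = 1) (hp : 1 ≤ p) (hc₀ : 0 ≤ c) (hc₁ : c ≤ 1) (huv : 0 ≤ min u v) :
    (2 : ℝ) ^ (1 - p) * c * min u v ≤ u * a ^ p + v * (c * b ^ p) := by
  have hu : min u v * c ≤ u := by
    calc min u v * c ≤ min u v := mul_le_of_le_one_right huv hc₁
      _ ≤ u := min_le_left u v
  have hv : min u v ≤ v := min_le_right u v
  calc (2 : ℝ) ^ (1 - p) * c * min u v ≤ (a ^ p + b ^ p) * c * min u v := by
        gcongr
        exact two_rpow_one_sub_le_rpow_add_rpow ha hb hab hp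
    _ = (min u v * c) * a ^ p + min u v * (c * b ^ p) := by ring
    _ ≤ u * a ^ p + v * (c * b ^ p) := by gcongr

lemma abs_rpow_eq_sq_rpow_half (x m : ℝ) : |x| ^ m = (x ^ 2) ^ (m / 2) := by
  rw [← sq_abs, ← rpow_natCast, ← rpow_mul (abs_nonneg x)]
  ring_nf

theorem kappa_lower_bound_general (d : ℕ) (m : ℝ) (hm : 2 ≤ m)
    (A B : Finset (Fin (d - 1))) (hAB : A ∪ B = Finset.univ) (hABdisj : A ∩ B = ∅)
    (hA : A.Nonempty) (hB : B.Nonempty)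
    (κ₀ : ℝ) (hκ₀ : 0 < κ₀) (κ : Fin (d - 1) → ℝ) (hκ : ∀ i, 0 < κ i)
    (ξ : Fin (d - 1) → ℝ) (hξ : ∑ i, (ξ i) ^ 2 = 1) :
    (2 : ℝ) ^ (-(m - 2) / 2) *
        min ((2 : ℝ) ^ (-(m - 2) * ((B.card : ℝ) - 1) / 2)) 1 *
        min (κ₀ * (A.inf' hA fun i => (κ i) ^ (m / 2))) (B.inf' hB fun j => κ j) ≤
      κ₀ * (∑ i ∈ A, κ i * (ξ i) ^ 2) ^ (m / 2) + ∑ j ∈ B, κ j * |ξ j| ^ m := by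
  set p := m / 2
  have hp : 1 ≤ p := by simp only [p]; linarith
  have hκ' : ∀ i, 0 ≤ κ i := fun i => (hκ i).le
  have hsplit : ∑ i ∈ A, ξ i ^ 2 + ∑ j ∈ B, ξ j ^ 2 = 1 := by
    rw [← sum_union (disjoint_iff_inter_eq_empty.2 hABdisj), hAB, hξ]
  have hfirst : κ₀ * A.inf' hA (κ · ^ p) * (∑ i ∈ A, ξ i ^ 2) ^ p ≤
      κ₀ * (∑ i ∈ A, κ i * ξ i ^ 2) ^ p := by
    rw [mul_assoc]
    gcongr
    exact inf'_rpow_mul_rpow_sum_le_rpow_sum_mul hA (fun i _ => hκ' i)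
      (fun i _ => sq_nonneg (ξ i)) (by linarith)
  have hsecond : B.inf' hB κ * ((#B : ℝ) ^ (1 - p) * (∑ j ∈ B, ξ j ^ 2) ^ p) ≤
      ∑ j ∈ B, κ j * |ξ j| ^ m := by
    simp_rw [abs_rpow_eq_sq_rpow_half]
    exact inf'_mul_card_rpow_mul_rpow_sum_le hB (fun i _ => hκ' i)
      (fun i _ => sq_nonneg (ξ i)) hp
  have hcard : min ((2 : ℝ) ^ (-(m - 2) * ((#B : ℝ) - 1) / 2)) 1 ≤ (#B : ℝ) ^ (1 - p) := by
    refine (min_le_left _ _).trans (le_of_eq_of_le ?_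
      (two_rpow_mul_sub_one_le_natCast_rpow hB.card_pos (by linarith : 1 - p ≤ 0)))
    congr 1
    simp only [p]
    ring
  have hmin₀ : 0 ≤ min (κ₀ * A.inf' hA (κ · ^ p)) (B.inf' hB κ) :=
    le_min (mul_nonneg hκ₀.le (le_inf' hA _ fun i _ => rpow_nonneg (hκ' i) p))
      (le_inf' hB κ fun i _ => hκ' i)
  calc _ ≤ (2 : ℝ) ^ (1 - p) * (#B : ℝ) ^ (1 - p) *
        min (κ₀ * A.inf' hA (κ · ^ p)) (B.inf' hB κ) := by
        rw [show -(m - 2) / 2 = 1 - p by ring]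
        gcongr
    _ ≤ _ := two_rpow_one_sub_mul_min_le (sum_nonneg (fun i _ => sq_nonneg (ξ i)))
        (sum_nonneg (fun i _ => sq_nonneg (ξ i))) hsplit hp (by positivity)
        (rpow_le_one_of_one_le_of_nonpos (by exact_mod_cast hB.card_pos) (by linarith)) hmin₀
    _ ≤ _ := add_le_add hfirst hsecond

theorem kappa_lower_bound (d : ℕ) (hd : 3 ≤ d) (m : ℝ) (hm : 2 ≤ m)
    (A B : Finset (Fin (d - 1))) (hAB : A ∪ B = Finset.univ) (hABdisj : A ∩ B = ∅)
    (hA : A.Nonempty) (hB : B.Nonempty)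
    (κ₀ : ℝ) (hκ₀ : 0 < κ₀) (κ : Fin (d - 1) → ℝ) (hκ : ∀ i, 0 < κ i)
    (ξ : Fin (d - 1) → ℝ) (hξ : ∑ i, (ξ i) ^ 2 = 1) :
    (2 : ℝ) ^ (-(m - 2) / 2) *
        min ((2 : ℝ) ^ (-(m - 2) * ((B.card : ℝ) - 1) / 2)) 1 *
        min (κ₀ * (A.inf' hA fun i => (κ i) ^ (m / 2))) (B.inf' hB fun j => κ j) ≤
      κ₀ * (∑ i ∈ A, κ i * (ξ i) ^ 2) ^ (m / 2) + ∑ j ∈ B, κ j * |ξ j| ^ m :=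
  kappa_lower_bound_general d m hm A B hAB hABdisj hA hB κ₀ hκ₀ κ hκ ξ hξ
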